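/- For s > p, the limit σ_{s,p} := lim_{N→∞} 𝒫_s(Q_p; N)/N^{s/p} exists, where Q_p = [0,1]^p, and 0 < σ_{s,p} < ∞. (Existence and finiteness of the limit, given the a priori bound 𝒫_s(Q_p;N) = O(N^{s/p}) and positivity of liminf.) -/

import Mathlib

/-!
Placing scaled copies `m⁻¹ • (x + q)` of an `N`-point configuration in the `m^p` subcubes gives
`𝒫(m^p N) ≥ m^s 𝒫(N)`. With monotonicity in `N` and `m^p N₀ ≤ N < (m+1)^p N₀` this yields
`𝒫(N)/N^{s/p} ≥ (m/(m+1))^s 𝒫(N₀)/N₀^{s/p}`, so every value lies below the liminf and the limit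
exists in `ℝ≥0∞`; it dominates `𝒫(1) > 0`.

Finiteness is the a priori bound `𝒫(N) = O(N^{s/p})`. Take the grid `m⁻¹ ℤ^p ∩ [0,1)^p` with
`m^p ≥ 2N`. If `z_x` is the rounding of `m x` to `ℤ^p`, then `|z - m x| ≥ |z - z_x| / 2` for every
`z ∈ ℤ^p`, so a point `x` contributes at most `(2m)^s ζ(s)` to the potentials at the grid points
other than `z_x / m`, where `ζ(s) = ∑_{z ≠ 0} |z|^{-s} < ∞` is the Epstein zeta function of `ℤ^p`.
Averaging over the at least `N` grid points that are none of the `z_{x_j} / m` gives one where the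
potential is at most `(2m)^s ζ(s) = O(N^{s/p})`.
-/

open scoped ENNReal BigOperators

/-- The `N`-th Riesz `s`-polarization constant of `A`. -/
noncomputable def rPolConst {p : ℕ} (s : ℝ) (A : Set (EuclideanSpace ℝ (Fin p))) (N : ℕ) : ℝ≥0∞ :=
  ⨆ x : {x : Fin N → EuclideanSpace ℝ (Fin p) // ∀ j, x j ∈ A},
    ⨅ y ∈ A, ∑ j, (edist y (x.1 j) ^ s)⁻¹

/-- The unit cube `[0,1]^p` in `ℝ^p`. -/
def unitCube (p : ℕ) : Set (EuclideanSpace ℝ (Fin p)) :=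
  {x | ∀ i, x i ∈ Set.Icc (0 : ℝ) 1}

open Filter Topology Finset

theorem inv_edist_inv_smul_rpow {E : Type*} [NormedAddCommGroup E] [NormedSpace ℝ E] {c : ℝ}
    (hc : 0 < c) (s : ℝ) (x y : E) :
    (edist (c⁻¹ • x) (c⁻¹ • y) ^ s)⁻¹ = ENNReal.ofReal c ^ s * (edist x y ^ s)⁻¹ := by
  have hc' : (‖c⁻¹‖₊ : ℝ≥0∞) = (ENNReal.ofReal c)⁻¹ := by
    change ‖c⁻¹‖ₑ = _
    rw [Real.enorm_eq_ofReal_abs, abs_of_pos (inv_pos.2 hc), ENNReal.ofReal_inv_of_pos hc]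
  have h0 : (ENNReal.ofReal c)⁻¹ ≠ 0 := ENNReal.inv_ne_zero.2 ENNReal.ofReal_ne_top
  have htop : (ENNReal.ofReal c)⁻¹ ≠ ⊤ := ENNReal.inv_ne_top.2 (ENNReal.ofReal_pos.2 hc).ne'
  rw [edist_smul₀, ENNReal.smul_def, smul_eq_mul, hc', ENNReal.mul_rpow_of_ne_top htop
    (edist_ne_top x y), ENNReal.mul_inv (Or.inl (ENNReal.rpow_pos (pos_iff_ne_zero.2 h0) htop).ne')
    (Or.inl (ENNReal.rpow_ne_top_of_ne_zero h0 htop)), ENNReal.inv_rpow, inv_inv]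

lemma inv_edist_rpow_eq_ofReal {X : Type*} [MetricSpace X] {x y : X} (h : x ≠ y) (s : ℝ) :
    (edist x y ^ s)⁻¹ = ENNReal.ofReal (dist x y ^ (-s)) := by
  have hd := dist_pos.2 h
  rw [edist_dist, ENNReal.ofReal_rpow_of_pos hd, Real.rpow_neg hd.le,
    ENNReal.ofReal_inv_of_pos (Real.rpow_pos_of_pos hd s)]

lemma EuclideanSpace.norm_le_norm_of_abs_le {ι : Type*} [Fintype ι] {x y : EuclideanSpace ℝ ι}
    (h : ∀ i, |x i| ≤ |y i|) : ‖x‖ ≤ ‖y‖ := by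
  simp only [EuclideanSpace.norm_eq, Real.norm_eq_abs, sq_abs]
  exact Real.sqrt_le_sqrt (sum_le_sum fun i _ => sq_le_sq.2 (h i))

lemma exists_pow_mem_Icc {p n : ℕ} (hp : 0 < p) (hn : 0 < n) :
    ∃ m, 0 < m ∧ n ≤ m ^ p ∧ m ^ p ≤ 2 ^ p * n := by
  classical
  have h : ∃ m, n ≤ m ^ p := ⟨n, Nat.le_self_pow hp.ne' n⟩
  obtain ⟨m, hm⟩ : ∃ m, Nat.find h = m + 1 := Nat.exists_eq_succ_of_ne_zero fun h0 => by
    simpa [h0, zero_pow hp.ne', hn.ne'] using Nat.find_spec h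
  refine ⟨m + 1, m.succ_pos, hm ▸ Nat.find_spec h, ?_⟩
  have hlt : m ^ p < n := not_le.1 (Nat.find_min h (by omega))
  rcases m.eq_zero_or_pos with rfl | hm0
  · simpa using Nat.one_le_two_pow.trans (Nat.le_mul_of_pos_right _ hn)
  · calc (m + 1) ^ p ≤ (2 * m) ^ p := Nat.pow_le_pow_left (by omega) p
      _ = 2 ^ p * m ^ p := Nat.mul_pow 2 m p
      _ ≤ 2 ^ p * n := by gcongr

lemma exists_pow_mul_le_lt {p N₀ : ℕ} (hp : 0 < p) (hN₀ : 0 < N₀) (N : ℕ) :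
    ∃ m, m ^ p * N₀ ≤ N ∧ N < (m + 1) ^ p * N₀ := by
  classical
  have h : ∃ m, N < (m + 1) ^ p * N₀ :=
    ⟨N, N.lt_succ_self.trans_le ((Nat.le_self_pow hp.ne' _).trans (Nat.le_mul_of_pos_right _ hN₀))⟩
  refine ⟨Nat.find h, ?_, Nat.find_spec h⟩
  rcases hm : Nat.find h with _ | k
  · simp [zero_pow hp.ne']
  · exact not_lt.1 (Nat.find_min h (by omega))

lemma tendsto_natCast_div_add_one_rpow (s : ℝ) :
    Tendsto (fun m : ℕ => ((m : ℝ≥0∞) / (m + 1)) ^ s) atTop (𝓝 1) := by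
  have h : Tendsto (fun m : ℕ => (((m : NNReal) / (m + 1) : NNReal) : ℝ≥0∞)) atTop (𝓝 1) :=
    ENNReal.tendsto_coe.2 (tendsto_natCast_div_add_atTop 1)
  have hcoe : ∀ m : ℕ, (((m : NNReal) / (m + 1) : NNReal) : ℝ≥0∞) = (m : ℝ≥0∞) / (m + 1) := by
    intro m
    rw [ENNReal.coe_div (by positivity)]
    push_cast
    rfl
  simp only [hcoe] at h
  have := (ENNReal.continuous_rpow_const (y := s)).tendsto 1 |>.comp h
  rwa [ENNReal.one_rpow] at this

section rPolConst

variable {p : ℕ} {s : ℝ} {A : Set (EuclideanSpace ℝ (Fin p))}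

theorem iInf_sum_le_rPolConst {ι : Type*} [Fintype ι] {N : ℕ} (hN : Fintype.card ι = N)
    (x : ι → EuclideanSpace ℝ (Fin p)) (hx : ∀ i, x i ∈ A) :
    ⨅ y ∈ A, ∑ i, (edist y (x i) ^ s)⁻¹ ≤ rPolConst s A N := by
  subst hN
  let e := Fintype.equivFin ι
  refine le_iSup_of_le ⟨x ∘ e.symm, fun j => hx _⟩ (iInf₂_mono fun y _ => ?_)
  exact (e.symm.sum_comp fun i => (edist y (x i) ^ s)⁻¹).ge

theorem rPolConst_mono (hA : A.Nonempty) : Monotone (rPolConst s A) := by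
  intro N M hNM
  obtain ⟨k, rfl⟩ := Nat.exists_eq_add_of_le hNM
  obtain ⟨a, ha⟩ := hA
  refine iSup_le fun x => ?_
  refine le_trans ?_ (iInf_sum_le_rPolConst (Fintype.card_fin _) (Fin.append x.1 fun _ : Fin k => a)
    (Fin.addCases (by simpa using x.2) (by simpa using fun _ => ha)))
  refine iInf₂_mono fun y _ => ?_
  rw [Fin.sum_univ_add]
  simp only [Fin.append_left]
  exact le_self_add

theorem rPolConst_one_pos (hs : 0 ≤ s) (hA : Bornology.IsBounded A) (hne : A.Nonempty) :
    0 < rPolConst s A 1 := by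
  obtain ⟨a, ha⟩ := hne
  have hdiam : Metric.ediam A ^ s ≠ ⊤ := ENNReal.rpow_ne_top_of_nonneg hs hA.ediam_ne_top
  calc (0 : ℝ≥0∞) < (Metric.ediam A ^ s)⁻¹ := ENNReal.inv_pos.2 hdiam
    _ ≤ ⨅ y ∈ A, ∑ _i : Fin 1, (edist y a ^ s)⁻¹ := by
      refine le_iInf₂ fun y hy => ?_
      rw [Fin.sum_univ_one]
      gcongr
      exact Metric.edist_le_ediam_of_mem hy ha
    _ ≤ rPolConst s A 1 := iInf_sum_le_rPolConst (Fintype.card_fin 1) _ fun _ => ha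

end rPolConst

lemma zero_mem_unitCube {p : ℕ} : (0 : EuclideanSpace ℝ (Fin p)) ∈ unitCube p :=
  fun _ => by simp

lemma isCompact_unitCube (p : ℕ) : IsCompact (unitCube p) := by
  have : unitCube p = EuclideanSpace.equiv (Fin p) ℝ ⁻¹' Set.Icc 0 1 := by
    ext x
    simp [unitCube, Pi.le_def, forall_and]
  rw [this]
  exact (EuclideanSpace.equiv (Fin p) ℝ).toHomeomorph.isCompact_preimage.2 isCompact_Icc

section Grid

variable {p m : ℕ}

def gridVec (q : Fin p → Fin m) : EuclideanSpace ℝ (Fin p) := WithLp.toLp 2 fun i => (q i : ℝ)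

@[simp] lemma gridVec_apply (q : Fin p → Fin m) (i : Fin p) : gridVec q i = q i := rfl

lemma exists_fin_mul_sub_mem_Icc (hm : 0 < m) {t : ℝ} (ht : t ∈ Set.Icc (0 : ℝ) 1) :
    ∃ k : Fin m, (m : ℝ) * t - k ∈ Set.Icc (0 : ℝ) 1 := by
  have hmt : 0 ≤ (m : ℝ) * t := mul_nonneg m.cast_nonneg ht.1
  have hmt' : (m : ℝ) * t ≤ m := mul_le_of_le_one_right m.cast_nonneg ht.2
  refine ⟨⟨min ⌊(m : ℝ) * t⌋₊ (m - 1), (min_le_right _ _).trans_lt (Nat.sub_lt hm one_pos)⟩, ?_⟩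
  rcases le_or_gt ⌊(m : ℝ) * t⌋₊ (m - 1) with h | h
  · simp only [min_eq_left h, Set.mem_Icc, sub_nonneg]
    exact ⟨Nat.floor_le hmt, by linarith [Nat.lt_floor_add_one ((m : ℝ) * t)]⟩
  · have hle : (m : ℝ) ≤ m * t := (Nat.le_floor_iff hmt).1 (by omega)
    simp only [min_eq_right h.le, Nat.cast_pred hm, Set.mem_Icc]
    constructor <;> linarith

lemma exists_smul_sub_gridVec_mem_unitCube (hm : 0 < m) {y : EuclideanSpace ℝ (Fin p)}
    (hy : y ∈ unitCube p) : ∃ q : Fin p → Fin m, (m : ℝ) • y - gridVec q ∈ unitCube p := by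
  choose q hq using fun i => exists_fin_mul_sub_mem_Icc hm (hy i)
  exact ⟨q, fun i => by simpa using hq i⟩

lemma inv_smul_add_gridVec_mem_unitCube (hm : 0 < m) {x : EuclideanSpace ℝ (Fin p)}
    (hx : x ∈ unitCube p) (q : Fin p → Fin m) : (m : ℝ)⁻¹ • (x + gridVec q) ∈ unitCube p := by
  intro i
  have hq : (q i : ℝ) + 1 ≤ m := by exact_mod_cast (q i).isLt
  obtain ⟨h0, h1⟩ := hx i
  simp only [PiLp.smul_apply, PiLp.add_apply, gridVec_apply, smul_eq_mul, Set.mem_Icc]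
  constructor
  · positivity
  · rw [inv_mul_le_iff₀ (by exact_mod_cast hm)]
    linarith

theorem rPolConst_pow_mul {s : ℝ} (hm : 0 < m) (N : ℕ) :
    (m : ℝ≥0∞) ^ s * rPolConst s (unitCube p) N ≤ rPolConst s (unitCube p) (m ^ p * N) := by
  have hm' : (0 : ℝ) < m := by exact_mod_cast hm
  rw [rPolConst, ENNReal.mul_iSup]
  refine iSup_le fun x => ?_
  let z : (Fin p → Fin m) × Fin N → EuclideanSpace ℝ (Fin p) :=
    fun qj => (m : ℝ)⁻¹ • (x.1 qj.2 + gridVec qj.1)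
  refine le_trans ?_ (iInf_sum_le_rPolConst (by simp) z
    fun qj => inv_smul_add_gridVec_mem_unitCube hm (x.2 _) _)
  refine le_iInf₂ fun y hy => ?_
  obtain ⟨q, hq⟩ := exists_smul_sub_gridVec_mem_unitCube hm hy
  have hscale : ∀ j, (edist y (z (q, j)) ^ s)⁻¹
      = (m : ℝ≥0∞) ^ s * (edist ((m : ℝ) • y - gridVec q) (x.1 j) ^ s)⁻¹ := by
    intro j
    conv_lhs => rw [← inv_smul_smul₀ hm'.ne' y, ← sub_add_cancel ((m : ℝ) • y) (gridVec q)]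
    rw [inv_edist_inv_smul_rpow hm', edist_add_right, ENNReal.ofReal_natCast]
  calc (m : ℝ≥0∞) ^ s * ⨅ w ∈ unitCube p, ∑ j, (edist w (x.1 j) ^ s)⁻¹
      ≤ (m : ℝ≥0∞) ^ s * ∑ j, (edist ((m : ℝ) • y - gridVec q) (x.1 j) ^ s)⁻¹ := by
        gcongr
        exact iInf₂_le _ hq
    _ = ∑ j, (edist y (z (q, j)) ^ s)⁻¹ := by simp only [mul_sum, hscale]
    _ ≤ ∑ qj, (edist y (z qj) ^ s)⁻¹ := by
        rw [Fintype.sum_prod_type]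
        exact single_le_sum (f := fun q => ∑ j, (edist y (z (q, j)) ^ s)⁻¹)
          (fun _ _ => zero_le) (mem_univ q)

end Grid

section Lattice

variable {p m : ℕ} {s : ℝ}

abbrev intLattice (p : ℕ) : Submodule ℤ (EuclideanSpace ℝ (Fin p)) :=
  Submodule.span ℤ (Set.range (EuclideanSpace.basisFun (Fin p) ℝ).toBasis)

lemma mem_intLattice {x : EuclideanSpace ℝ (Fin p)} :
    x ∈ intLattice p ↔ ∀ i, ∃ n : ℤ, (n : ℝ) = x i := by
  rw [Module.Basis.mem_span_iff_repr_mem]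
  simp

lemma finrank_intLattice : Module.finrank ℤ (intLattice p) = p := by
  rw [ZLattice.rank ℝ]
  simp

-- The `z = 0` term vanishes because `0 ^ (-s) = 0` for `s ≠ 0`.
noncomputable def epsteinZeta (p : ℕ) (s : ℝ) : ℝ≥0∞ :=
  ∑' z : intLattice p, ENNReal.ofReal (‖z‖ ^ (-s))

lemma epsteinZeta_ne_top (hs : (p : ℝ) < s) : epsteinZeta p s ≠ ⊤ := by
  have hsum := ZLattice.summable_norm_rpow (intLattice p) (-s)
    (by rw [finrank_intLattice]; linarith)
  rw [epsteinZeta, ← ENNReal.ofReal_tsum_of_nonneg (fun _ => by positivity) hsum]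
  exact ENNReal.ofReal_ne_top

noncomputable def roundVec (x : EuclideanSpace ℝ (Fin p)) : EuclideanSpace ℝ (Fin p) :=
  WithLp.toLp 2 fun i => (round (x i) : ℝ)

lemma roundVec_mem_intLattice (x : EuclideanSpace ℝ (Fin p)) : roundVec x ∈ intLattice p :=
  mem_intLattice.2 fun _ => ⟨_, rfl⟩

lemma gridVec_mem_intLattice (q : Fin p → Fin m) : gridVec q ∈ intLattice p :=
  mem_intLattice.2 fun i => ⟨q i, by simp⟩

lemma gridVec_injective : Function.Injective (gridVec : (Fin p → Fin m) → _) := by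
  intro q q' h
  funext i
  exact Fin.ext (by simpa using congrArg (· i) h)

lemma norm_sub_roundVec_le {z : EuclideanSpace ℝ (Fin p)} (hz : z ∈ intLattice p)
    (x : EuclideanSpace ℝ (Fin p)) : ‖z - roundVec x‖ ≤ 2 * ‖z - x‖ := by
  rw [← abs_two, ← Real.norm_eq_abs, ← norm_smul]
  refine EuclideanSpace.norm_le_norm_of_abs_le fun i => ?_
  obtain ⟨n, hn⟩ := mem_intLattice.1 hz i
  have hround := round_le (x i) n
  simp only [PiLp.sub_apply, PiLp.smul_apply, smul_eq_mul, roundVec, ← hn, abs_mul, abs_two]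
  linarith [abs_sub_le (n : ℝ) (x i) (round (x i)), abs_sub_comm (n : ℝ) (x i)]

end Lattice

section UpperBound

variable {p m : ℕ} {s : ℝ}

theorem sum_inv_edist_gridVec_le (hs : 0 ≤ s) (hm : 0 < m) (w : EuclideanSpace ℝ (Fin p)) :
    ∑ q ∈ univ.filter (fun q : Fin p → Fin m => gridVec q ≠ roundVec ((m : ℝ) • w)),
      (edist ((m : ℝ)⁻¹ • gridVec q) w ^ s)⁻¹ ≤ (m : ℝ≥0∞) ^ s * (2 ^ s * epsteinZeta p s) := by
  have hm' : (0 : ℝ) < m := by exact_mod_cast hm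
  set z₀ := roundVec ((m : ℝ) • w)
  let ι : (Fin p → Fin m) → intLattice p :=
    fun q => ⟨gridVec q - z₀, sub_mem (gridVec_mem_intLattice q) (roundVec_mem_intLattice _)⟩
  have hι : Function.Injective ι := fun q q' h =>
    gridVec_injective (sub_left_inj.1 (congrArg Subtype.val h))
  have hterm : ∀ q ∈ univ.filter (fun q : Fin p → Fin m => gridVec q ≠ z₀),
      (edist ((m : ℝ)⁻¹ • gridVec q) w ^ s)⁻¹
        ≤ (m : ℝ≥0∞) ^ s * (2 ^ s * ENNReal.ofReal (‖ι q‖ ^ (-s))) := by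
    intro q hq
    have hpos : 0 < ‖gridVec q - z₀‖ := norm_pos_iff.2 (sub_ne_zero.2 (mem_filter.1 hq).2)
    have hnear : ‖gridVec q - z₀‖ ≤ 2 * ‖gridVec q - (m : ℝ) • w‖ :=
      norm_sub_roundVec_le (gridVec_mem_intLattice q) _
    have hne : gridVec q ≠ (m : ℝ) • w := by
      rintro h
      rw [h, sub_self, norm_zero, mul_zero] at hnear
      rw [h] at hpos
      linarith
    have htwo : (2 : ℝ≥0∞) ^ s = ENNReal.ofReal (2 ^ s) := by
      rw [← ENNReal.ofReal_rpow_of_nonneg zero_le_two hs, ENNReal.ofReal_ofNat]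
    conv_lhs => rw [← inv_smul_smul₀ hm'.ne' w]
    rw [inv_edist_inv_smul_rpow hm', ENNReal.ofReal_natCast, inv_edist_rpow_eq_ofReal hne,
      dist_eq_norm, htwo, ← ENNReal.ofReal_mul (by positivity)]
    gcongr
    calc ‖gridVec q - (m : ℝ) • w‖ ^ (-s) ≤ (‖gridVec q - z₀‖ / 2) ^ (-s) :=
          Real.rpow_le_rpow_of_nonpos (by positivity) (by linarith) (by linarith)
      _ = 2 ^ s * ‖ι q‖ ^ (-s) := by
          rw [Real.div_rpow hpos.le zero_le_two, Real.rpow_neg zero_le_two, div_inv_eq_mul,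
            mul_comm]
          rfl
  calc _ ≤ ∑ q ∈ univ.filter (fun q : Fin p → Fin m => gridVec q ≠ z₀),
        (m : ℝ≥0∞) ^ s * (2 ^ s * ENNReal.ofReal (‖ι q‖ ^ (-s))) := sum_le_sum hterm
    _ ≤ (m : ℝ≥0∞) ^ s * (2 ^ s * ∑' q, ENNReal.ofReal (‖ι q‖ ^ (-s))) := by
        simp only [← mul_sum]
        gcongr
        exact ENNReal.sum_le_tsum _
    _ ≤ (m : ℝ≥0∞) ^ s * (2 ^ s * epsteinZeta p s) := by
        gcongr
        exact ENNReal.tsum_comp_le_tsum_of_injective hι _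

theorem exists_sum_inv_edist_gridVec_le (hs : 0 ≤ s) (hm : 0 < m) {N : ℕ} (hmN : 2 * N ≤ m ^ p)
    (x : Fin N → EuclideanSpace ℝ (Fin p)) :
    ∃ q : Fin p → Fin m, ∑ j, (edist ((m : ℝ)⁻¹ • gridVec q) (x j) ^ s)⁻¹
      ≤ (m : ℝ≥0∞) ^ s * (2 ^ s * epsteinZeta p s) := by
  set B := (m : ℝ≥0∞) ^ s * (2 ^ s * epsteinZeta p s)
  set S : (Fin p → Fin m) → ℝ≥0∞ := fun q => ∑ j, (edist ((m : ℝ)⁻¹ • gridVec q) (x j) ^ s)⁻¹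
  set good := univ.filter fun q : Fin p → Fin m => ∀ j, gridVec q ≠ roundVec ((m : ℝ) • x j)
  have hbad : (univ.filter fun q : Fin p → Fin m =>
      ¬ ∀ j, gridVec q ≠ roundVec ((m : ℝ) • x j)).card ≤ N := by
    refine (card_le_card_of_injOn gridVec (t := univ.image fun j => roundVec ((m : ℝ) • x j))
      ?_ gridVec_injective.injOn).trans (card_image_le.trans (card_fin N).le)
    intro q hq
    obtain ⟨j, hj⟩ : ∃ j, gridVec q = roundVec ((m : ℝ) • x j) := by simpa using hq
    simp [hj]
  have hgood : N ≤ good.card ∧ 0 < good.card := by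
    have : good.card + (univ.filter fun q : Fin p → Fin m =>
        ¬ ∀ j, gridVec q ≠ roundVec ((m : ℝ) • x j)).card = m ^ p := by
      rw [card_filter_add_card_filter_not, card_univ, Fintype.card_fun, Fintype.card_fin,
        Fintype.card_fin]
    have : 0 < m ^ p := pow_pos hm p
    omega
  obtain ⟨q, hq, hmin⟩ := exists_min_image good S (card_pos.1 hgood.2)
  refine ⟨q, ?_⟩
  have hsum : ∑ q ∈ good, S q ≤ N * B :=
    calc ∑ q ∈ good, S q
        = ∑ j, ∑ q ∈ good, (edist ((m : ℝ)⁻¹ • gridVec q) (x j) ^ s)⁻¹ := sum_comm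
      _ ≤ ∑ _j : Fin N, B := by
        refine sum_le_sum fun j _ => le_trans (sum_le_sum_of_subset fun q hq => ?_)
          (sum_inv_edist_gridVec_le hs hm (x j))
        simp only [good, mem_filter] at hq ⊢
        exact ⟨hq.1, hq.2 j⟩
      _ = N * B := by simp
  have hNS : (N : ℝ≥0∞) * S q ≤ N * B :=
    calc (N : ℝ≥0∞) * S q ≤ good.card * S q := by gcongr; exact_mod_cast hgood.1
      _ ≤ ∑ q ∈ good, S q := by rw [← nsmul_eq_mul]; exact card_nsmul_le_sum good S _ hmin
      _ ≤ N * B := hsum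
  rcases N.eq_zero_or_pos with rfl | hN
  · simp
  · exact (ENNReal.mul_le_mul_iff_right (by exact_mod_cast hN.ne') (ENNReal.natCast_ne_top N)).1 hNS

theorem rPolConst_unitCube_le (hs : 0 ≤ s) (hm : 0 < m) {N : ℕ} (hmN : 2 * N ≤ m ^ p) :
    rPolConst s (unitCube p) N ≤ (m : ℝ≥0∞) ^ s * (2 ^ s * epsteinZeta p s) := by
  refine iSup_le fun x => ?_
  obtain ⟨q, hq⟩ := exists_sum_inv_edist_gridVec_le hs hm hmN x.1
  refine (iInf₂_le _ ?_).trans hq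
  simpa using inv_smul_add_gridVec_mem_unitCube hm zero_mem_unitCube q

theorem exists_rPolConst_unitCube_le_mul_rpow (hp : 0 < p) (hs : (p : ℝ) < s) :
    ∃ C : ℝ≥0∞, C ≠ ⊤ ∧
      ∀ N : ℕ, 0 < N → rPolConst s (unitCube p) N ≤ C * (N : ℝ≥0∞) ^ (s / p) := by
  have hs0 : 0 ≤ s := (Nat.cast_nonneg p).trans hs.le
  have hsp : 0 ≤ s / p := by positivity
  refine ⟨2 ^ s * epsteinZeta p s * 2 ^ ((p + 1) * (s / p)), ?_, fun N hN => ?_⟩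
  · exact ENNReal.mul_ne_top (ENNReal.mul_ne_top (ENNReal.rpow_ne_top_of_nonneg hs0 (by simp))
      (epsteinZeta_ne_top hs)) (ENNReal.rpow_ne_top_of_nonneg (by positivity) (by simp))
  obtain ⟨m, hm, hmN, hmN'⟩ := exists_pow_mem_Icc hp (by omega : 0 < 2 * N)
  have hpow : (m : ℝ≥0∞) ^ s = ((m ^ p : ℕ) : ℝ≥0∞) ^ (s / p) := by
    rw [Nat.cast_pow, ← ENNReal.rpow_natCast, ← ENNReal.rpow_mul]
    congr 1
    field_simp
  calc rPolConst s (unitCube p) N ≤ (m : ℝ≥0∞) ^ s * (2 ^ s * epsteinZeta p s) :=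
        rPolConst_unitCube_le hs0 hm hmN
    _ ≤ ((2 ^ (p + 1) * N : ℕ) : ℝ≥0∞) ^ (s / p) * (2 ^ s * epsteinZeta p s) := by
        rw [hpow]
        gcongr
        exact_mod_cast hmN'.trans (by ring_nf; omega)
    _ = _ := by
        rw [Nat.cast_mul, ENNReal.mul_rpow_of_nonneg _ _ hsp, Nat.cast_pow, ← ENNReal.rpow_natCast,
          ← ENNReal.rpow_mul]
        push_cast
        ring

end UpperBound

section SelfSimilar

variable {P : ℕ → ℝ≥0∞} {p : ℕ} {s : ℝ}

lemma mul_div_rpow_le_div_rpow (hp : 0 < p) (hs : 0 ≤ s) (hmono : Monotone P)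
    (hself : ∀ m N : ℕ, 0 < m → (m : ℝ≥0∞) ^ s * P N ≤ P (m ^ p * N)) {m N₀ N : ℕ} (hm : 0 < m)
    (hlow : m ^ p * N₀ ≤ N) (hup : N ≤ (m + 1) ^ p * N₀) :
    ((m : ℝ≥0∞) / (m + 1)) ^ s * (P N₀ / (N₀ : ℝ≥0∞) ^ (s / p))
      ≤ P N / (N : ℝ≥0∞) ^ (s / p) := by
  have hsp : 0 ≤ s / p := by positivity
  have hden : (N : ℝ≥0∞) ^ (s / p) ≤ ((m : ℝ≥0∞) + 1) ^ s * (N₀ : ℝ≥0∞) ^ (s / p) :=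
    calc (N : ℝ≥0∞) ^ (s / p) ≤ (((m + 1) ^ p * N₀ : ℕ) : ℝ≥0∞) ^ (s / p) := by
          gcongr
      _ = _ := by
          rw [Nat.cast_mul, ENNReal.mul_rpow_of_nonneg _ _ hsp, Nat.cast_pow,
            ← ENNReal.rpow_natCast, ← ENNReal.rpow_mul]
          push_cast
          congr 2
          field_simp
  have hm1 : ((m : ℝ≥0∞) + 1) ^ s ≠ 0 := (ENNReal.rpow_pos (by simp) (by simp)).ne'
  have hm1' : ((m : ℝ≥0∞) + 1) ^ s ≠ ⊤ := ENNReal.rpow_ne_top_of_nonneg hs (by simp)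
  calc ((m : ℝ≥0∞) / (m + 1)) ^ s * (P N₀ / (N₀ : ℝ≥0∞) ^ (s / p))
      = (m : ℝ≥0∞) ^ s * P N₀ / (((m : ℝ≥0∞) + 1) ^ s * (N₀ : ℝ≥0∞) ^ (s / p)) := by
        rw [ENNReal.div_rpow_of_nonneg _ _ hs, ENNReal.mul_div_mul_comm (Or.inl hm1) (Or.inl hm1')]
    _ ≤ P N / (N : ℝ≥0∞) ^ (s / p) :=
        ENNReal.div_le_div ((hself m N₀ hm).trans (hmono hlow)) hden

theorem le_liminf_div_rpow (hp : 0 < p) (hs : 0 ≤ s) (hmono : Monotone P)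
    (hself : ∀ m N : ℕ, 0 < m → (m : ℝ≥0∞) ^ s * P N ≤ P (m ^ p * N)) {N₀ : ℕ} (hN₀ : 0 < N₀) :
    P N₀ / (N₀ : ℝ≥0∞) ^ (s / p) ≤ liminf (fun N : ℕ => P N / (N : ℝ≥0∞) ^ (s / p)) atTop := by
  choose m hm using exists_pow_mul_le_lt hp hN₀
  have hm_tendsto : Tendsto m atTop atTop := by
    refine tendsto_atTop_atTop.2 fun k => ⟨k ^ p * N₀, fun N hN => Nat.lt_succ_iff.1 ?_⟩
    exact (Nat.pow_lt_pow_iff_left hp.ne').1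
      (Nat.lt_of_mul_lt_mul_right (hN.trans_lt (hm N).2))
  have hlim := ENNReal.Tendsto.mul_const ((tendsto_natCast_div_add_one_rpow s).comp hm_tendsto)
    (Or.inl one_ne_zero) (b := P N₀ / (N₀ : ℝ≥0∞) ^ (s / p))
  rw [one_mul] at hlim
  rw [← hlim.liminf_eq]
  refine liminf_le_liminf ?_
  filter_upwards [hm_tendsto.eventually_gt_atTop 0] with N hN
  exact mul_div_rpow_le_div_rpow hp hs hmono hself hN (hm N).1 (hm N).2.le

theorem tendsto_div_rpow_liminf (hp : 0 < p) (hs : 0 ≤ s) (hmono : Monotone P)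
    (hself : ∀ m N : ℕ, 0 < m → (m : ℝ≥0∞) ^ s * P N ≤ P (m ^ p * N)) :
    Tendsto (fun N : ℕ => P N / (N : ℝ≥0∞) ^ (s / p)) atTop
      (𝓝 (liminf (fun N : ℕ => P N / (N : ℝ≥0∞) ^ (s / p)) atTop)) := by
  refine tendsto_of_liminf_eq_limsup rfl (le_antisymm ?_ liminf_le_limsup)
  exact limsup_le_of_le (by isBoundedDefault)
    (eventually_atTop.2 ⟨1, fun N hN => le_liminf_div_rpow hp hs hmono hself hN⟩)

end SelfSimilar

theorem stmt7 {p : ℕ} (hp : 0 < p) (s : ℝ) (hs : (p : ℝ) < s) :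
    ∃ σ : ℝ≥0∞, 0 < σ ∧ σ < ⊤ ∧
      Filter.Tendsto (fun N : ℕ => rPolConst s (unitCube p) N / (N : ℝ≥0∞) ^ (s / p))
        Filter.atTop (nhds σ) := by
  have hs0 : 0 ≤ s := (Nat.cast_nonneg p).trans hs.le
  have hne : (unitCube p).Nonempty := ⟨0, zero_mem_unitCube⟩
  have hself := fun m N (hm : 0 < m) => rPolConst_pow_mul (p := p) (s := s) hm N
  have hmono := rPolConst_mono (s := s) hne
  have hlim := tendsto_div_rpow_liminf hp hs0 hmono hself
  obtain ⟨C, hC, hPC⟩ := exists_rPolConst_unitCube_le_mul_rpow hp hs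
  refine ⟨_, ?_, ?_, hlim⟩
  · calc 0 < rPolConst s (unitCube p) 1 :=
          rPolConst_one_pos hs0 (isCompact_unitCube p).isBounded hne
      _ = rPolConst s (unitCube p) 1 / ((1 : ℕ) : ℝ≥0∞) ^ (s / p) := by simp
      _ ≤ _ := le_liminf_div_rpow hp hs0 hmono hself one_pos
  · refine lt_of_le_of_lt (le_of_tendsto hlim ?_) hC.lt_top
    exact eventually_atTop.2 ⟨1, fun N hN => ENNReal.div_le_of_le_mul (hPC N hN)⟩
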